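/- Monotonicity of Δ_{u,v}, Property 2 (Lemma 3(2)): let V : 𝒬 → ℝ be monotone and let u, v ∈ 𝒰 with u_n = m ∈ M_n for some SBS n ∈ {1,…,N}. If Q¹, Q² ∈ 𝒬 satisfy Q¹_{n,m} ≥ Q²_{n,m} and Q¹_{n′,m′} = Q²_{n′,m′} for all other (n′,m′) ∈ I, then Δ_{u,v}(Q¹) ≤ Δ_{u,v}(Q²); i.e., Δ_{u,v}(Q) is monotonically non-increasing in Q_{n,m}. -/

import Mathlib

/-!
The stage costs `d(Q)` cancel in `Δ_{u,v}(Q)` and the power costs do not depend on `Q`, so only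
the expected continuation values matter. Since `u` serves queue `(n,m)`, the next state under `u`
does not depend on `Q_{n,m}` at all; the next state under `v` is monotone in `Q`, hence so is its
value under the monotone `V`. Raising `Q_{n,m}` therefore leaves `J_V(Q,u)` unchanged and can only
raise `J_V(Q,v)`.
-/

open Finset

namespace HetNet

/-- The queue index set `I = {(n,m) : 0 ≤ n ≤ N, m ∈ M_n}`. -/
abbrev Idx {N M : ℕ} (cache : Fin (N + 1) → Finset (Fin M)) : Type :=
  {p : Fin (N + 1) × Fin M // p.2 ∈ cache p.1}

/-- The feasible action space `𝒰`: each BS schedules a cached content or idles (`none`),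
and the MBS (BS `0`) and the SBSs do not operate concurrently. -/
def Feasible {N M : ℕ} (cache : Fin (N + 1) → Finset (Fin M))
    (u : Fin (N + 1) → Option (Fin M)) : Prop :=
  (∀ n m, u n = some m → m ∈ cache n) ∧ (u 0 ≠ none → ∀ n, n ≠ 0 → u n = none)

instance {N M : ℕ} (cache : Fin (N + 1) → Finset (Fin M)) :
    DecidablePred (Feasible cache) := by
  intro u; unfold Feasible; infer_instance

instance {N M : ℕ} (cache : Fin (N + 1) → Finset (Fin M)) :
    Nonempty {u : Fin (N + 1) → Option (Fin M) // Feasible cache u} :=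
  ⟨⟨fun _ => none, by unfold Feasible; exact ⟨fun _ _ h => (by cases h), fun h => absurd rfl h⟩⟩⟩

/-- Queue `(n,m)` is served by action `u`. -/
def Served {N M : ℕ} (u : Fin (N + 1) → Option (Fin M)) (n : Fin (N + 1)) (m : Fin M) : Prop :=
  (n = 0 ∧ u 0 = some m) ∨ (n ≠ 0 ∧ (u 0 = some m ∨ u n = some m))

instance {N M : ℕ} (u : Fin (N + 1) → Option (Fin M)) (n : Fin (N + 1)) (m : Fin M) :
    Decidable (Served u n m) := by unfold Served; infer_instance

/-- The queue transition map `T(Q,u,A)`. -/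
def T {N M : ℕ} {cache : Fin (N + 1) → Finset (Fin M)} (bound : Idx cache → ℕ)
    (Q : Idx cache → ℕ) (u : Fin (N + 1) → Option (Fin M)) (A : Idx cache → ℕ) :
    Idx cache → ℕ := fun i =>
  if Served u i.val.1 i.val.2 then min (A i) (bound i) else min (Q i + A i) (bound i)

/-- The network power cost `p(u) = Σ_n p(n, u_n)` (with `p(n,0) = 0` for an idling BS). -/
def pcost {N M : ℕ} (p : Fin (N + 1) → Fin M → ℝ) (u : Fin (N + 1) → Option (Fin M)) : ℝ :=
  ∑ n, (u n).elim 0 (p n)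

/-- The sum request queue length `d(Q)`. -/
def dcost {N M : ℕ} {cache : Fin (N + 1) → Finset (Fin M)} (Q : Idx cache → ℕ) : ℝ :=
  ∑ i, (Q i : ℝ)

/-- The per-stage cost `g(Q,u) = d(Q) + w·p(u)`. -/
def gcost {N M : ℕ} (p : Fin (N + 1) → Fin M → ℝ) (w : ℝ)
    {cache : Fin (N + 1) → Finset (Fin M)}
    (Q : Idx cache → ℕ) (u : Fin (N + 1) → Option (Fin M)) : ℝ :=
  dcost Q + w * pcost p u

/-- The state-action cost `J_V(Q,u) = g(Q,u) + Σ_{A∈𝒜} P(A)·V(T(Q,u,A))`. -/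
def Jcost {N M : ℕ} (p : Fin (N + 1) → Fin M → ℝ) (w : ℝ)
    {cache : Fin (N + 1) → Finset (Fin M)} (bound : Idx cache → ℕ)
    {ι : Type} [Fintype ι] (P : ι → ℝ) (A : ι → Idx cache → ℕ)
    (V : (Idx cache → ℕ) → ℝ) (Q : Idx cache → ℕ)
    (u : Fin (N + 1) → Option (Fin M)) : ℝ :=
  gcost p w Q u + ∑ a, P a * V (T bound Q u (A a))

variable {N M : ℕ} {cache : Fin (N + 1) → Finset (Fin M)}

theorem served_of_ne_zero {u : Fin (N + 1) → Option (Fin M)} {n : Fin (N + 1)} {m : Fin M}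
    (hn : n ≠ 0) (hun : u n = some m) : Served u n m :=
  Or.inr ⟨hn, Or.inr hun⟩

theorem T_le_bound (bound : Idx cache → ℕ) (Q : Idx cache → ℕ)
    (u : Fin (N + 1) → Option (Fin M)) (A : Idx cache → ℕ) (i : Idx cache) :
    T bound Q u A i ≤ bound i := by
  unfold T
  split <;> exact min_le_right _ _

theorem T_mono (bound : Idx cache → ℕ) (u : Fin (N + 1) → Option (Fin M)) (A : Idx cache → ℕ)
    {Q₁ Q₂ : Idx cache → ℕ} (hQ : ∀ i, Q₁ i ≤ Q₂ i) (i : Idx cache) :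
    T bound Q₁ u A i ≤ T bound Q₂ u A i := by
  unfold T
  split
  · exact le_rfl
  · exact min_le_min_right _ (Nat.add_le_add_right (hQ i) _)

theorem T_congr_of_eq_of_not_served (bound : Idx cache → ℕ) (u : Fin (N + 1) → Option (Fin M))
    (A : Idx cache → ℕ) {Q₁ Q₂ : Idx cache → ℕ}
    (hQ : ∀ i : Idx cache, ¬ Served u i.val.1 i.val.2 → Q₁ i = Q₂ i) :
    T bound Q₁ u A = T bound Q₂ u A := by
  funext i
  unfold T
  by_cases h : Served u i.val.1 i.val.2
  · simp only [if_pos h]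
  · simp only [if_neg h, hQ i h]

theorem V_T_mono {bound : Idx cache → ℕ} {V : (Idx cache → ℕ) → ℝ}
    (hV : ∀ Q₁ Q₂ : Idx cache → ℕ, (∀ i, Q₁ i ≤ bound i) → (∀ i, Q₂ i ≤ bound i) →
      (∀ i, Q₁ i ≤ Q₂ i) → V Q₁ ≤ V Q₂)
    (u : Fin (N + 1) → Option (Fin M)) (A : Idx cache → ℕ)
    {Q₁ Q₂ : Idx cache → ℕ} (hQ : ∀ i, Q₁ i ≤ Q₂ i) :
    V (T bound Q₁ u A) ≤ V (T bound Q₂ u A) :=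
  hV _ _ (T_le_bound bound Q₁ u A) (T_le_bound bound Q₂ u A) (T_mono bound u A hQ)

theorem Jcost_sub_Jcost (p : Fin (N + 1) → Fin M → ℝ) (w : ℝ) (bound : Idx cache → ℕ)
    {ι : Type} [Fintype ι] (P : ι → ℝ) (A : ι → Idx cache → ℕ) (V : (Idx cache → ℕ) → ℝ)
    (Q : Idx cache → ℕ) (u v : Fin (N + 1) → Option (Fin M)) :
    Jcost p w bound P A V Q u - Jcost p w bound P A V Q v =
      w * (pcost p u - pcost p v) +
        ∑ a, P a * (V (T bound Q u (A a)) - V (T bound Q v (A a))) := by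
  simp only [Jcost, gcost, mul_sub, sum_sub_distrib]
  ring

theorem delta_monotone_SBS_general {N M : ℕ} (cache : Fin (N + 1) → Finset (Fin M))
    (bound : Idx cache → ℕ)
    (p : Fin (N + 1) → Fin M → ℝ)
    (w : ℝ)
    {ι : Type} [Fintype ι] (P : ι → ℝ) (A : ι → Idx cache → ℕ)
    (hP : ∀ a, 0 ≤ P a)
    (V : (Idx cache → ℕ) → ℝ)
    (hV : ∀ Q₁ Q₂ : Idx cache → ℕ, (∀ i, Q₁ i ≤ bound i) → (∀ i, Q₂ i ≤ bound i) →
      (∀ i, Q₁ i ≤ Q₂ i) → V Q₁ ≤ V Q₂)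
    (u v : Fin (N + 1) → Option (Fin M))
    (n : Fin (N + 1)) (hn : n ≠ 0) (m : Fin M) (hm : m ∈ cache n) (hun : u n = some m)
    (Q₁ Q₂ : Idx cache → ℕ)
    (heq : ∀ i : Idx cache, i.val ≠ (n, m) → Q₁ i = Q₂ i)
    (hge : Q₂ ⟨(n, m), hm⟩ ≤ Q₁ ⟨(n, m), hm⟩) :
    Jcost p w bound P A V Q₁ u - Jcost p w bound P A V Q₁ v ≤
      Jcost p w bound P A V Q₂ u - Jcost p w bound P A V Q₂ v := by
  have hle : ∀ i, Q₂ i ≤ Q₁ i := fun i => by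
    by_cases h : i.val = (n, m)
    · obtain rfl : i = ⟨(n, m), hm⟩ := Subtype.ext h
      exact hge
    · exact (heq i h).ge
  have hTu : ∀ a, T bound Q₁ u (A a) = T bound Q₂ u (A a) := fun a =>
    T_congr_of_eq_of_not_served bound u (A a) fun i hi =>
      heq i fun h => hi (h ▸ served_of_ne_zero hn hun)
  rw [Jcost_sub_Jcost, Jcost_sub_Jcost]
  simp only [hTu]
  gcongr with a
  · exact hP a
  · exact V_T_mono hV v (A a) hle

/-- Lemma 3(2): monotonicity of `Δ_{u,v}`, Property 2: let `V` be monotone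
and let `u, v ∈ 𝒰` with `u_n = m ∈ M_n` for some SBS `n ∈ {1,…,N}`.  If `Q¹_{n,m} ≥ Q²_{n,m}`
and `Q¹, Q²` agree on all other coordinates of `I`, then `Δ_{u,v}(Q¹) ≤ Δ_{u,v}(Q²)`,
i.e. `Δ_{u,v}` is non-increasing in `Q_{n,m}`. -/
theorem delta_monotone_SBS {N M : ℕ} (cache : Fin (N + 1) → Finset (Fin M))
    (hcache0 : ∀ m : Fin M, m ∈ cache 0)
    (bound : Idx cache → ℕ)
    (p : Fin (N + 1) → Fin M → ℝ) (hp : ∀ n m, 0 ≤ p n m)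
    (w : ℝ) (hw : 0 ≤ w)
    {ι : Type} [Fintype ι] (P : ι → ℝ) (A : ι → Idx cache → ℕ)
    (hP : ∀ a, 0 ≤ P a) (hPsum : ∑ a, P a = 1)
    (V : (Idx cache → ℕ) → ℝ)
    (hV : ∀ Q₁ Q₂ : Idx cache → ℕ, (∀ i, Q₁ i ≤ bound i) → (∀ i, Q₂ i ≤ bound i) →
      (∀ i, Q₁ i ≤ Q₂ i) → V Q₁ ≤ V Q₂)
    (u v : Fin (N + 1) → Option (Fin M)) (hu : Feasible cache u) (hv : Feasible cache v)
    (n : Fin (N + 1)) (hn : n ≠ 0) (m : Fin M) (hm : m ∈ cache n) (hun : u n = some m)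
    (Q₁ Q₂ : Idx cache → ℕ)
    (hQ₁ : ∀ i, Q₁ i ≤ bound i) (hQ₂ : ∀ i, Q₂ i ≤ bound i)
    (heq : ∀ i : Idx cache, i.val ≠ (n, m) → Q₁ i = Q₂ i)
    (hge : Q₂ ⟨(n, m), hm⟩ ≤ Q₁ ⟨(n, m), hm⟩) :
    Jcost p w bound P A V Q₁ u - Jcost p w bound P A V Q₁ v ≤
      Jcost p w bound P A V Q₂ u - Jcost p w bound P A V Q₂ v :=
  delta_monotone_SBS_general cache bound p w P A hP V hV u v n hn m hm hun Q₁ Q₂ heq hge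

end HetNet
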